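/- Let f be a quadratic form over K = GF(q²) whose zero set in PG(2,q²) is an F_{q²}-conic 𝒪 which is secant to ℓ∞, with 𝒪 ∩ ℓ∞ = {P̄, Q̄}, P̄ ≠ Q̄. Then [𝒪] ∩ Σ∞ = [P] ∪ [Q], and in PG(4,q²) the set [𝒪]⋆ ∩ {z = 0} equals [P]⋆ ∪ [Q]⋆ ∪ PQ^q ∪ P^qQ, where P, Q are the points of the transversal g corresponding to P̄, Q̄, PQ^q is the line of PG(4,q²) through P and Q^q, and P^qQ is its conjugate. -/

import Mathlib

open scoped Classical
open Matrix

noncomputable section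

namespace BaerConics

/-- Points of the projective space `PG(n-1, K)` as projectivization of `Fin n → K`. -/
abbrev PP (K : Type) [Field K] (n : ℕ) : Type := Projectivization K (Fin n → K)

variable {K : Type} [Field K] {m n : ℕ}

/-- The (at most one) projective point determined by a vector:  empty if `v = 0`,
and the singleton `{[v]}` otherwise. -/
def projPt (v : Fin n → K) : Set (PP K n) :=
  {p | ∃ h : v ≠ 0, p = Projectivization.mk K v h}

/-- The set of projective points lying in a linear subspace. -/
def ptsOf (W : Submodule K (Fin n → K)) : Set (PP K n) :=
  {p | p.rep ∈ W}

/-- The projective line through two points (as the set of points of the span). -/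
def lineTh (P Q : PP K n) : Set (PP K n) :=
  ptsOf (Submodule.span K {P.rep, Q.rep})

/-- `X` is a projective flat of projective dimension `d`. -/
def IsFlat (d : ℕ) (X : Set (PP K n)) : Prop :=
  ∃ W : Submodule K (Fin n → K), Module.finrank K W = d + 1 ∧ X = ptsOf W

/-- Image of a set of vectors under the projective map induced by a matrix. -/
def mimg (M : Matrix (Fin m) (Fin n) K) (X : Set (Fin n → K)) : Set (PP K m) :=
  {p | ∃ v ∈ X, p ∈ projPt (M.mulVec v)}

/-- Coordinatewise application of a ring homomorphism to a vector. -/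
def mapVec {L : Type} [Field L] (σ : K →+* L) (v : Fin n → K) : Fin n → L :=
  fun i => σ (v i)

lemma mulVec_inj (M : Matrix (Fin n) (Fin n) K) (hM : IsUnit M.det) :
    Function.Injective M.mulVec := by
  intro a b hab
  have h := congrArg (fun v => M⁻¹.mulVec v) hab
  simpa [Matrix.mulVec_mulVec, Matrix.nonsing_inv_mul M hM] using h

/-- The projective transformation induced by an invertible matrix. -/
def pmap (M : Matrix (Fin n) (Fin n) K) (hM : IsUnit M.det) (p : PP K n) : PP K n :=
  Projectivization.mk K (M.mulVec p.rep) (by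
    intro h
    apply p.rep_nonzero
    have h0 : M.mulVec p.rep = M.mulVec 0 := by simpa [Matrix.mulVec_zero] using h
    exact mulVec_inj M hM h0)

/-- The map induced on projective points by the coordinatewise `q`-power map. -/
def frobPt (q : ℕ) (p : PP K n) : PP K n :=
  Projectivization.mk K (fun i => p.rep i ^ q) (by
    obtain ⟨i, hi⟩ := Function.ne_iff.mp p.rep_nonzero
    intro h
    exact pow_ne_zero q (by simpa using hi) (by simpa using congrFun h i))

/-- The line at infinity `z = 0` of `PG(2, K)`. -/
def linf (K : Type) [Field K] : Set (PP K 3) := {p | p.rep 2 = 0}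

/-- Coordinatewise application of the algebra map to a vector. -/
def algVec (F : Type) {K : Type} [Field F] [Field K] [Algebra F K] {n : ℕ}
    (v : Fin n → F) : Fin n → K := fun i => algebraMap F K (v i)

/-- Vectors representing the points of the standard Baer subline of `ℓ∞`. -/
def sublineVecs (F K : Type) [Field F] [Field K] [Algebra F K] : Set (Fin 3 → K) :=
  {v | ∃ θ : F, v = ![algebraMap F K θ, 1, 0]} ∪ {![1, 0, 0]}

/-- Nonzero vectors representing the points of `ℓ∞`. -/
def linfVecs (K : Type) [Field K] : Set (Fin 3 → K) := {v | v ≠ 0 ∧ v 2 = 0}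

/-- Vectors with all coordinates in (the image of) `F`, representing the canonical
Baer subplane. -/
def subplaneVecs (F K : Type) [Field F] [Field K] [Algebra F K] : Set (Fin 3 → K) :=
  {v | ∃ w : Fin 3 → F, w ≠ 0 ∧ v = algVec F w}

/-- Vectors of the standard conic with parameters in `S`. -/
def conicVecs {K : Type} [Field K] (S : Set K) : Set (Fin 3 → K) :=
  {v | ∃ θ ∈ S, v = ![1, θ, θ ^ 2]} ∪ {![0, 0, 1]}

/-- `b` is a Baer subline of the line `ℓ` of `PG(2,q²)`. -/
def IsBaerSublineOf (F : Type) {K : Type} [Field F] [Field K] [Algebra F K]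
    (b ℓ : Set (PP K 3)) : Prop :=
  ∃ M : Matrix (Fin 3) (Fin 3) K, IsUnit M.det ∧
    ℓ = mimg M (linfVecs K) ∧ b = mimg M (sublineVecs F K)

/-- `B` is a Baer subplane of `PG(2,q²)`. -/
def IsBaerSubplane (F : Type) {K : Type} [Field F] [Field K] [Algebra F K]
    (B : Set (PP K 3)) : Prop :=
  ∃ M : Matrix (Fin 3) (Fin 3) K, IsUnit M.det ∧ B = mimg M (subplaneVecs F K)

/-- `C` is the image under `PGL(3,K)` of the standard conic with parameters in `S`. -/
def IsConicOver {K : Type} [Field K] (S : Set K) (C : Set (PP K 3)) : Prop :=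
  ∃ M : Matrix (Fin 3) (Fin 3) K, IsUnit M.det ∧ C = mimg M (conicVecs S)

/-- An `F_q`-conic of `PG(2,q²)`: a nondegenerate conic of a Baer subplane. -/
def IsFqConic (F : Type) {K : Type} [Field F] [Field K] [Algebra F K]
    (C : Set (PP K 3)) : Prop :=
  IsConicOver (Set.range (algebraMap F K)) C

/-- An `F_{q²}`-conic of `PG(2,q²)`: a nondegenerate conic. -/
def IsFq2Conic {K : Type} [Field K] (C : Set (PP K 3)) : Prop :=
  IsConicOver (Set.univ : Set K) C

/-- `𝒦` is an `ℓ∞`-Baer pencil with vertex `P`. -/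
def IsLinfBaerPencil (F : Type) {K : Type} [Field F] [Field K] [Algebra F K]
    (𝒦 : Set (PP K 3)) (P : PP K 3) : Prop :=
  P ∈ linf K ∧ ∃ ℓ b : Set (PP K 3), IsBaerSublineOf F b ℓ ∧ P ∉ ℓ ∧
    (∃! X, X ∈ b ∩ linf K) ∧ 𝒦 = ⋃ X ∈ b, lineTh P X

/-- `m` is a line of the Baer subplane `B`, with extension (full line) `ℓ`. -/
def IsLineOfExt {K : Type} [Field K] (q : ℕ) (B m ℓ : Set (PP K 3)) : Prop :=
  IsFlat 1 ℓ ∧ m = B ∩ ℓ ∧ m.ncard = q + 1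

/-- `m` is a line of the Baer subplane `B`. -/
def IsLineOf {K : Type} [Field K] (q : ℕ) (B m : Set (PP K 3)) : Prop :=
  ∃ ℓ, IsLineOfExt q B m ℓ

/-- `P` and `Q` are conjugate with respect to the Baer subline `b` of `ℓ∞`. -/
def ConjWrtSubline (F : Type) {K : Type} [Field F] [Field K] [Algebra F K]
    (q : ℕ) (b : Set (PP K 3)) (P Q : PP K 3) : Prop :=
  ∃ (M : Matrix (Fin 3) (Fin 3) K) (hM : IsUnit M.det),
    mimg M (linfVecs K) = linf K ∧ b = mimg M (sublineVecs F K) ∧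
    ∃ P₀ : PP K 3, P = pmap M hM P₀ ∧ Q = pmap M hM (frobPt q P₀)

/-- A representative vector for the point `(δ,1,0)` (resp. `(1,0,0)`) of `ℓ∞`. -/
def ptInfVec {K : Type} [Field K] : Option K → Fin 3 → K
  | some δ => ![δ, 1, 0]
  | none => ![1, 0, 0]

lemma ptInfVec_ne {K : Type} [Field K] (t : Option K) : ptInfVec t ≠ 0 := by
  cases t with
  | none => intro h; have h0 := congrFun h 0; simp [ptInfVec] at h0
  | some δ => intro h; have h0 := congrFun h 1; simp [ptInfVec] at h0

/-- The point of `ℓ∞` with parameter `δ ∈ K ∪ {∞}`. -/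
def ptInf {K : Type} [Field K] (t : Option K) : PP K 3 :=
  Projectivization.mk K (ptInfVec t) (ptInfVec_ne t)

/-- The hyperplane at infinity `z = 0` of `PG(4, F)`. -/
def sinf (F : Type) [Field F] : Set (PP F 5) := {p | p.rep 4 = 0}

/-- Affine coordinates of the Bruck-Bose image of an affine point of `PG(2,q²)`. -/
def bbVec {F K : Type} [Field F] [Field K] (c0 c1 : K → F) (p : PP K 3) : Fin 5 → F :=
  ![c0 (p.rep 0 / p.rep 2), c1 (p.rep 0 / p.rep 2),
    c0 (p.rep 1 / p.rep 2), c1 (p.rep 1 / p.rep 2), 1]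

/-- The Bruck-Bose map (meaningful on affine points of `PG(2,q²)`). -/
def bb {F K : Type} [Field F] [Field K] (c0 c1 : K → F) (p : PP K 3) : PP F 5 :=
  Projectivization.mk F (bbVec c0 c1 p) (by
    intro h
    have h4 := congrFun h 4
    simp [bbVec] at h4)

/-- First spanning vector of the spread line with parameter `δ ∈ K ∪ {∞}`. -/
def spreadV1 {F K : Type} [Field F] [Field K] (c0 c1 : K → F) : Option K → Fin 5 → F
  | some δ => ![c0 δ, c1 δ, 1, 0, 0]
  | none => ![1, 0, 0, 0, 0]

/-- Second spanning vector of the spread line with parameter `δ ∈ K ∪ {∞}`. -/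
def spreadV2 {F K : Type} [Field F] [Field K] (c0 c1 : K → F) (t0 t1 : F) :
    Option K → Fin 5 → F
  | some δ => ![t0 * c1 δ, c0 δ + t1 * c1 δ, 0, 1, 0]
  | none => ![0, 1, 0, 0, 0]

/-- The line of the regular spread `S` with parameter `δ ∈ K ∪ {∞}`. -/
def spreadLine {F K : Type} [Field F] [Field K] (c0 c1 : K → F) (t0 t1 : F)
    (t : Option K) : Set (PP F 5) :=
  ptsOf (Submodule.span F {spreadV1 c0 c1 t, spreadV2 c0 c1 t0 t1 t})

/-- The extension `[T]⋆` of a spread line to `PG(4,q²)`. -/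
def extSpreadLine (F : Type) {K : Type} [Field F] [Field K] [Algebra F K]
    (c0 c1 : K → F) (t0 t1 : F) (t : Option K) : Set (PP K 5) :=
  ptsOf (Submodule.span K
    {algVec F (spreadV1 c0 c1 t), algVec F (spreadV2 c0 c1 t0 t1 t)})

/-- The `K`-extension of an `F`-subspace. -/
def extSub (F : Type) {K : Type} [Field F] [Field K] [Algebra F K] {n : ℕ}
    (W : Submodule F (Fin n → F)) : Submodule K (Fin n → K) :=
  Submodule.span K (algVec F '' (W : Set (Fin n → F)))

def A0v {K : Type} [Field K] (τ : K) (q : ℕ) : Fin 5 → K := ![τ ^ q, -1, 0, 0, 0]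
def A1v {K : Type} [Field K] (τ : K) (q : ℕ) : Fin 5 → K := ![0, 0, τ ^ q, -1, 0]
def B0v {K : Type} [Field K] (τ : K) : Fin 5 → K := ![τ, -1, 0, 0, 0]
def B1v {K : Type} [Field K] (τ : K) : Fin 5 → K := ![0, 0, τ, -1, 0]

/-- The transversal line `g` of the regular spread, in `PG(4,q²)`. -/
def gline {K : Type} [Field K] (τ : K) (q : ℕ) : Set (PP K 5) :=
  ptsOf (Submodule.span K {A0v τ q, A1v τ q})

/-- The conjugate transversal line `g^q` of the regular spread, in `PG(4,q²)`. -/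
def gqline {K : Type} [Field K] (τ : K) : Set (PP K 5) :=
  ptsOf (Submodule.span K {B0v τ, B1v τ})

/-- Representative vector of the point `T = δA₀ + A₁` of `g`. -/
def gptVec {K : Type} [Field K] (τ : K) (q : ℕ) : Option K → Fin 5 → K
  | some δ => δ • A0v τ q + A1v τ q
  | none => A0v τ q

/-- Representative vector of the conjugate point `T^q = δ^q A₀^q + A₁^q` of `g^q`. -/
def gqptVec {K : Type} [Field K] (τ : K) (q : ℕ) : Option K → Fin 5 → K
  | some δ => δ ^ q • B0v τ + B1v τ
  | none => B0v τ

lemma gptVec_ne {K : Type} [Field K] (τ : K) (q : ℕ) (t : Option K) :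
    gptVec τ q t ≠ 0 := by
  cases t with
  | none =>
      intro h
      have := congrFun h 1
      simp [gptVec, A0v] at this
  | some δ =>
      intro h
      have := congrFun h 3
      simp [gptVec, A0v, A1v] at this

lemma gqptVec_ne {K : Type} [Field K] (τ : K) (q : ℕ) (t : Option K) :
    gqptVec τ q t ≠ 0 := by
  cases t with
  | none =>
      intro h
      have := congrFun h 1
      simp [gqptVec, B0v] at this
  | some δ =>
      intro h
      have := congrFun h 3
      simp [gqptVec, B0v, B1v] at this

/-- The point of `g` corresponding to the point of `ℓ∞` with parameter `δ ∈ K ∪ {∞}`. -/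
def gpt {K : Type} [Field K] (τ : K) (q : ℕ) (t : Option K) : PP K 5 :=
  Projectivization.mk K (gptVec τ q t) (gptVec_ne τ q t)

/-- The point of `g^q` conjugate to `gpt τ q t`. -/
def gqpt {K : Type} [Field K] (τ : K) (q : ℕ) (t : Option K) : PP K 5 :=
  Projectivization.mk K (gqptVec τ q t) (gqptVec_ne τ q t)

/-- Evaluation of the quadratic form with matrix `M` at `v`. -/
def qeval {K : Type} [Field K] {n : ℕ} (M : Matrix (Fin n) (Fin n) K) (v : Fin n → K) : K :=
  v ⬝ᵥ M.mulVec v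

/-- Vectors of the standard twisted cubic (inside the hyperplane `x₄ = 0`)
with parameters in `S`. -/
def tcVecs {K : Type} [Field K] (S : Set K) : Set (Fin 5 → K) :=
  {v | ∃ θ ∈ S, v = ![1, θ, θ ^ 2, θ ^ 3, 0]} ∪ {![0, 0, 0, 1, 0]}

/-- Vectors of the standard 4-dimensional normal rational curve with parameters in `S`. -/
def nrcVecs {K : Type} [Field K] (S : Set K) : Set (Fin 5 → K) :=
  {v | ∃ θ ∈ S, v = ![1, θ, θ ^ 2, θ ^ 3, θ ^ 4]} ∪ {![0, 0, 0, 0, 1]}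

/-- `R` is a regulus of `Σ∞` in `PG(4,q)`. -/
def IsRegulus {F : Type} [Field F] (q : ℕ) (R : Set (Set (PP F 5))) : Prop :=
  R.ncard = q + 1 ∧
  (∀ ℓ ∈ R, IsFlat 1 ℓ ∧ ℓ ⊆ sinf F) ∧
  (∀ ℓ ∈ R, ∀ ℓ' ∈ R, ℓ ≠ ℓ' → ℓ ∩ ℓ' = ∅) ∧
  (∀ mℓ : Set (PP F 5), IsFlat 1 mℓ → mℓ ⊆ sinf F →
    (∃ ℓ₁ ∈ R, ∃ ℓ₂ ∈ R, ∃ ℓ₃ ∈ R, ℓ₁ ≠ ℓ₂ ∧ ℓ₁ ≠ ℓ₃ ∧ ℓ₂ ≠ ℓ₃ ∧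
      (mℓ ∩ ℓ₁).Nonempty ∧ (mℓ ∩ ℓ₂).Nonempty ∧ (mℓ ∩ ℓ₃).Nonempty) →
    ∀ ℓ ∈ R, (mℓ ∩ ℓ).Nonempty)


/-- The Bruck-Bose substitution `(x₀,x₁,y₀,y₁,z) ↦ (x₀+x₁τ, y₀+y₁τ, z)`. -/
def bbSubst (F : Type) {K : Type} [Field F] [Field K] [Algebra F K] (τ : K)
    (v : Fin 5 → F) : Fin 3 → K :=
  ![algebraMap F K (v 0) + algebraMap F K (v 1) * τ,
    algebraMap F K (v 2) + algebraMap F K (v 3) * τ,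
    algebraMap F K (v 4)]

/-!
Write `X = (x₀ + x₁τ, y₀ + y₁τ, z)` and `X' = (x₀ + x₁τ^q, y₀ + y₁τ^q, z)`. Since `f = f∞ + τ f₀`
is an identity of quadratic forms, Frobenius gives `f^q(X') = f∞ + τ^q f₀`, and `τ ≠ τ^q`; so a
point of `PG(4,q²)` with `z = 0` lies on `[𝒪]⋆` iff `X ∈ 𝒪 ∩ ℓ∞ = {P̄, Q̄}` and
`X' ∈ 𝒪^q ∩ ℓ∞ = {P̄^q, Q̄^q}` (as vectors, zero allowed). The line through `T` and `T'^q` is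
exactly the locus where `X` is a multiple of `T̄` and `X'` a multiple of `T̄'^q`, so the four
choices give `[P]⋆`, `[Q]⋆`, `PQ^q` and `P^qQ`. Over `F` only the condition on `X` remains, and
since `1, τ` is an `F`-basis of `K` its solutions are the spread lines `[P]` and `[Q]`.
-/

section QuadraticForms

variable {F : Type} [Field F] [Algebra F K]

lemma qeval_smul (N : Matrix (Fin n) (Fin n) K) (c : K) (v : Fin n → K) :
    qeval N (c • v) = c ^ 2 * qeval N v := by
  simp only [qeval, mulVec_smul, smul_dotProduct, dotProduct_smul, smul_eq_mul]
  ring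

lemma qeval_map {L : Type} [Field L] (σ : K →+* L) (N : Matrix (Fin n) (Fin n) K)
    (v : Fin n → K) : qeval (N.map σ) (mapVec σ v) = σ (qeval N v) := by
  simp [qeval, mapVec, dotProduct, mulVec, map_sum]

lemma qeval_transpose_mul_mul (N : Matrix (Fin m) (Fin m) K) (C : Matrix (Fin m) (Fin n) K)
    (v : Fin n → K) : qeval (Cᵀ * N * C) v = qeval N (C *ᵥ v) := by
  rw [qeval, qeval, ← mulVec_mulVec, ← mulVec_mulVec, dotProduct_mulVec, vecMul_transpose]

lemma qeval_sub_add_smul (A B N : Matrix (Fin n) (Fin n) K) (c : K) (v : Fin n → K) :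
    qeval (A - (B + c • N)) v = qeval A v - (qeval B v + c * qeval N v) := by
  simp [qeval, sub_mulVec, add_mulVec, smul_mulVec, dotProduct_sub, dotProduct_add]

lemma qeval_map_algebraMap (N : Matrix (Fin n) (Fin n) F) (w : Fin n → F) :
    qeval (N.map (algebraMap F K)) (algVec F w) = algebraMap F K (qeval N w) :=
  qeval_map (algebraMap F K) N w

/-- The hypothesis makes `N` alternating (zero diagonal, `N i j = -N j i`), so the terms of
`v ⬝ᵥ N *ᵥ v` cancel in pairs. -/
lemma qeval_eq_zero_of_forall_algVec (N : Matrix (Fin n) (Fin n) K)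
    (h : ∀ w : Fin n → F, qeval N (algVec F w) = 0) (v : Fin n → K) : qeval N v = 0 := by
  have hsingle : ∀ i, algVec F (Pi.single i (1 : F)) = (Pi.single i 1 : Fin n → K) := by
    intro i; funext j; by_cases hj : j = i <;> simp [algVec, hj]
  have hdiag : ∀ i, N i i = 0 := by
    intro i
    simpa [hsingle, qeval, mulVec_single] using h (Pi.single i 1)
  have hanti : ∀ i j, N i j + N j i = 0 := by
    intro i j
    have hij := h (Pi.single i 1 + Pi.single j 1)
    have hadd : algVec F (Pi.single i (1 : F) + Pi.single j 1)
        = (Pi.single i 1 + Pi.single j 1 : Fin n → K) := by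
      funext k; simp [algVec, ← hsingle]
    simp [hadd, qeval, mulVec_add, mulVec_single, dotProduct_add, add_dotProduct, hdiag] at hij
    linear_combination hij
  have hsum : qeval N v = ∑ ij ∈ Finset.univ ×ˢ Finset.univ, v ij.1 * N ij.1 ij.2 * v ij.2 := by
    rw [Finset.sum_product]
    simp [qeval, dotProduct, mulVec, Finset.mul_sum, mul_assoc]
  rw [hsum]
  refine Finset.sum_involution (fun ij _ => ij.swap) (fun ij _ => ?_) (fun ij _ hne hfix => ?_)
    (fun ij _ => by simp) (fun ij _ => rfl)
  · simp only [Prod.fst_swap, Prod.snd_swap]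
    linear_combination v ij.1 * v ij.2 * hanti ij.1 ij.2
  · apply hne
    rw [show ij.2 = ij.1 from congrArg Prod.fst hfix, hdiag, mul_zero, zero_mul]

end QuadraticForms

section Projective

lemma exists_rep_mk_eq_smul (v : Fin n → K) (hv : v ≠ 0) :
    ∃ c : K, c ≠ 0 ∧ (Projectivization.mk K v hv).rep = c • v := by
  obtain ⟨c, hc⟩ := (Projectivization.mk_eq_mk_iff' K _ _ (Projectivization.rep_nonzero _) hv).mp
    (Projectivization.mk_rep _)
  refine ⟨c, fun h0 => Projectivization.rep_nonzero (Projectivization.mk K v hv) ?_, hc.symm⟩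
  rw [← hc, h0, zero_smul]

lemma qeval_rep_mk_eq_zero_iff (N : Matrix (Fin n) (Fin n) K) (v : Fin n → K) (hv : v ≠ 0) :
    qeval N (Projectivization.mk K v hv).rep = 0 ↔ qeval N v = 0 := by
  obtain ⟨c, hc, hrep⟩ := exists_rep_mk_eq_smul v hv
  simp [hrep, qeval_smul, hc]

lemma rep_mk_apply_eq_zero_iff (v : Fin n → K) (hv : v ≠ 0) (i : Fin n) :
    (Projectivization.mk K v hv).rep i = 0 ↔ v i = 0 := by
  obtain ⟨c, hc, hrep⟩ := exists_rep_mk_eq_smul v hv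
  simp [hrep, hc]

lemma lineTh_mk_mk (v w : Fin n → K) (hv : v ≠ 0) (hw : w ≠ 0) :
    lineTh (Projectivization.mk K v hv) (Projectivization.mk K w hw)
      = ptsOf (Submodule.span K {v, w}) := by
  simp only [lineTh, Submodule.span_insert, ← Projectivization.submodule_eq,
    Projectivization.submodule_mk]

lemma lineTh_comm (P Q : PP K n) : lineTh P Q = lineTh Q P := by
  rw [lineTh, lineTh, Set.pair_comm]

lemma span_pair_smul_sub_eq {V : Type} [AddCommGroup V] [Module K V] {c d : K} (h : c ≠ d)
    (u w : V) : Submodule.span K {c • u - w, d • u - w} = Submodule.span K {u, w} := by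
  have hcd : c - d ≠ 0 := sub_ne_zero.mpr h
  apply le_antisymm <;> rw [Submodule.span_le] <;> rintro x (rfl | rfl) <;>
    rw [SetLike.mem_coe, Submodule.mem_span_pair]
  · exact ⟨c, -1, by simp [sub_eq_add_neg]⟩
  · exact ⟨d, -1, by simp [sub_eq_add_neg]⟩
  · refine ⟨(c - d)⁻¹, -(c - d)⁻¹, ?_⟩
    match_scalars <;> field_simp <;> ring
  · refine ⟨d / (c - d), -(c / (c - d)), ?_⟩
    match_scalars <;> field_simp <;> ring

end Projective

lemma ptInfVec_two (t : Option K) : ptInfVec t 2 = 0 := by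
  cases t <;> rfl

section ConicAtInfinity

variable (M : Matrix (Fin 3) (Fin 3) K) (tP tQ : Option K)

lemma qeval_eq_zero_and_apply_two_iff
    (hsec : {p : PP K 3 | qeval M p.rep = 0} ∩ linf K = {ptInf tP, ptInf tQ}) (X : Fin 3 → K) :
    qeval M X = 0 ∧ X 2 = 0 ↔
      (∃ a : K, X = a • ptInfVec tP) ∨ ∃ a : K, X = a • ptInfVec tQ := by
  by_cases hX : X = 0
  · subst hX
    simpa [qeval] using Or.inl ⟨0, (zero_smul K _).symm⟩
  have hmem : qeval M X = 0 ∧ X 2 = 0 ↔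
      Projectivization.mk K X hX ∈ {p : PP K 3 | qeval M p.rep = 0} ∩ linf K := by
    rw [Set.mem_inter_iff, Set.mem_ofPred_eq, qeval_rep_mk_eq_zero_iff]
    exact and_congr_right' (rep_mk_apply_eq_zero_iff X hX 2).symm
  have hpt : ∀ t, Projectivization.mk K X hX = ptInf t ↔ ∃ a : K, X = a • ptInfVec t := by
    intro t
    rw [ptInf, Projectivization.mk_eq_mk_iff']
    simp only [eq_comm]
  rw [hmem, hsec, Set.mem_insert_iff, Set.mem_singleton_iff, hpt, hpt]

lemma qeval_map_eq_zero_and_apply_two_iff (σ : K ≃+* K)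
    (hsec : {p : PP K 3 | qeval M p.rep = 0} ∩ linf K = {ptInf tP, ptInf tQ}) (X : Fin 3 → K) :
    qeval (M.map σ) X = 0 ∧ X 2 = 0 ↔
      (∃ a : K, X = a • mapVec (σ : K →+* K) (ptInfVec tP)) ∨
        ∃ a : K, X = a • mapVec (σ : K →+* K) (ptInfVec tQ) := by
  obtain ⟨Y, rfl⟩ : ∃ Y, X = mapVec (σ : K →+* K) Y :=
    ⟨mapVec (σ.symm : K →+* K) X, by funext i; simp [mapVec]⟩
  have hsmul : ∀ e : Fin 3 → K, (∃ a : K, mapVec (σ : K →+* K) Y = a • mapVec (σ : K →+* K) e) ↔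
      ∃ a : K, Y = a • e := by
    intro e
    constructor
    · rintro ⟨a, ha⟩
      refine ⟨σ.symm a, funext fun i => σ.injective ?_⟩
      simpa [mapVec] using congrFun ha i
    · rintro ⟨a, rfl⟩
      exact ⟨σ a, funext fun i => by simp [mapVec]⟩
  rw [show M.map σ = M.map (σ : K →+* K) from rfl, qeval_map, hsmul, hsmul,
    ← qeval_eq_zero_and_apply_two_iff M tP tQ hsec Y]
  simp [mapVec]

end ConicAtInfinity

lemma mem_range_algebraMap_of_pow_card_eq_self {F : Type} [Field F] [Fintype F] [Fintype K]
    [Algebra F K] {x : K} (hx : x ^ Fintype.card F = x) : x ∈ Set.range (algebraMap F K) := by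
  rw [IsGalois.mem_range_algebraMap_iff_fixed]
  intro f
  obtain ⟨n, rfl⟩ := (FiniteField.bijective_frobeniusAlgEquivOfAlgebraic_pow F K).2 f
  rw [AlgEquiv.coe_pow, FiniteField.coe_frobeniusAlgEquivOfAlgebraic]
  exact Function.iterate_fixed hx _

lemma add_eq_and_mul_eq_of_sq_eq {τ τ' a b : K} (hne : τ ≠ τ') (hτ : τ ^ 2 = a * τ + b)
    (hτ' : τ' ^ 2 = a * τ' + b) : τ + τ' = a ∧ τ * τ' = -b := by
  have hsum : τ + τ' = a := by
    have h : (τ + τ' - a) * (τ - τ') = 0 := by linear_combination hτ - hτ'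
    linear_combination (mul_eq_zero.mp h).resolve_right (sub_ne_zero.mpr hne)
  exact ⟨hsum, by linear_combination τ * hsum - hτ⟩

lemma add_mul_eq_zero_and_add_mul_eq_zero_iff {s r : K} (hsr : s ≠ r) (a b : K) :
    a + b * s = 0 ∧ a + b * r = 0 ↔ a = 0 ∧ b = 0 := by
  refine ⟨fun ⟨hs, hr⟩ => ?_, fun ⟨ha, hb⟩ => by simp [ha, hb]⟩
  have hb : b = 0 := by
    have h : b * (s - r) = 0 := by linear_combination hs - hr
    exact (mul_eq_zero.mp h).resolve_right (sub_ne_zero.mpr hsr)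
  exact ⟨by simpa [hb] using hs, hb⟩

section BruckBose

variable {F : Type} [Field F] [Algebra F K]

/-- For `s = τ` this extends `bbSubst F τ` to `K⁵`; `s = τ^q` gives the conjugate substitution. -/
def bbMatrix (s : K) : Matrix (Fin 3) (Fin 5) K :=
  !![1, s, 0, 0, 0; 0, 0, 1, s, 0; 0, 0, 0, 0, 1]

lemma bbMatrix_mulVec (s : K) (v : Fin 5 → K) :
    bbMatrix s *ᵥ v = ![v 0 + v 1 * s, v 2 + v 3 * s, v 4] := by
  funext i
  fin_cases i <;> simp [bbMatrix, mulVec, dotProduct, Fin.sum_univ_five] <;> ring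

lemma bbSubst_eq_bbMatrix_mulVec (τ : K) (v : Fin 5 → F) :
    bbSubst F τ v = bbMatrix τ *ᵥ algVec F v := by
  rw [bbMatrix_mulVec]
  rfl

lemma mapVec_bbMatrix_mulVec (σ : K →+* K) (s : K) (v : Fin 5 → K) :
    mapVec σ (bbMatrix s *ᵥ v) = bbMatrix (σ s) *ᵥ mapVec σ v := by
  funext i
  fin_cases i <;> simp [bbMatrix_mulVec, mapVec]

lemma algebraMap_add_mul_eq_zero_iff {τ : K} (hτF : τ ∉ Set.range (algebraMap F K)) (a b : F) :
    algebraMap F K a + algebraMap F K b * τ = 0 ↔ a = 0 ∧ b = 0 := by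
  refine ⟨fun h => ?_, fun ⟨ha, hb⟩ => by simp [ha, hb]⟩
  by_cases hb : b = 0
  · subst hb
    simpa using h
  · refine absurd ⟨-(a / b), ?_⟩ hτF
    rw [map_neg, map_div₀, neg_eq_iff_eq_neg, div_eq_iff (by simpa using hb)]
    linear_combination h

lemma bbSubst_injective {τ : K} (hτF : τ ∉ Set.range (algebraMap F K)) :
    Function.Injective (bbSubst F τ) := by
  intro u w h
  have hcoord : ∀ i j : Fin 5, algebraMap F K (u i) + algebraMap F K (u j) * τ
      = algebraMap F K (w i) + algebraMap F K (w j) * τ →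
      u i = w i ∧ u j = w j := by
    intro i j hij
    have := (algebraMap_add_mul_eq_zero_iff hτF (u i - w i) (u j - w j)).mp (by
      simp only [map_sub]; linear_combination hij)
    exact ⟨sub_eq_zero.mp this.1, sub_eq_zero.mp this.2⟩
  have h01 := hcoord 0 1 (congrFun h 0)
  have h23 := hcoord 2 3 (congrFun h 1)
  have h4 : u 4 = w 4 := (algebraMap F K).injective (congrFun h 2)
  funext i
  fin_cases i
  exacts [h01.1, h01.2, h23.1, h23.2, h4]

lemma bbSubst_add_smul (τ : K) (a b : F) (u w : Fin 5 → F) :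
    bbSubst F τ (a • u + b • w)
      = algebraMap F K a • bbSubst F τ u + algebraMap F K b • bbSubst F τ w := by
  funext i
  fin_cases i <;> simp [bbSubst, Algebra.smul_def] <;> ring

variable (M : Matrix (Fin 3) (Fin 3) K) (Minf M0 : Matrix (Fin 5) (Fin 5) F) {τ : K}

lemma qeval_bbSubst_eq_zero_iff (hτF : τ ∉ Set.range (algebraMap F K))
    (hdec : ∀ v : Fin 5 → F, qeval M (bbSubst F τ v) =
      algebraMap F K (qeval Minf v) + algebraMap F K (qeval M0 v) * τ) (v : Fin 5 → F) :
    (qeval Minf v = 0 ∧ qeval M0 v = 0) ∧ v 4 = 0 ↔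
      qeval M (bbSubst F τ v) = 0 ∧ bbSubst F τ v 2 = 0 := by
  rw [hdec, algebraMap_add_mul_eq_zero_iff hτF]
  simp [bbSubst]

lemma qeval_bbMatrix_mulVec
    (hdec : ∀ v : Fin 5 → F, qeval M (bbSubst F τ v) =
      algebraMap F K (qeval Minf v) + algebraMap F K (qeval M0 v) * τ) (v : Fin 5 → K) :
    qeval M (bbMatrix τ *ᵥ v) =
      qeval (Minf.map (algebraMap F K)) v + qeval (M0.map (algebraMap F K)) v * τ := by
  have h := qeval_eq_zero_of_forall_algVec ((bbMatrix τ)ᵀ * M * bbMatrix τ -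
      (Minf.map (algebraMap F K) + τ • M0.map (algebraMap F K))) (F := F) (fun w => by
    rw [qeval_sub_add_smul, qeval_transpose_mul_mul, ← bbSubst_eq_bbMatrix_mulVec, hdec,
      qeval_map_algebraMap, qeval_map_algebraMap]
    ring) v
  rw [qeval_sub_add_smul, qeval_transpose_mul_mul] at h
  linear_combination h

lemma qeval_map_bbMatrix_mulVec (σ : K ≃ₐ[F] K)
    (hdecK : ∀ v : Fin 5 → K, qeval M (bbMatrix τ *ᵥ v) =
      qeval (Minf.map (algebraMap F K)) v + qeval (M0.map (algebraMap F K)) v * τ)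
    (u : Fin 5 → K) :
    qeval (M.map σ) (bbMatrix (σ τ) *ᵥ u) =
      qeval (Minf.map (algebraMap F K)) u + qeval (M0.map (algebraMap F K)) u * σ τ := by
  obtain ⟨w, rfl⟩ : ∃ w, u = mapVec (σ : K →+* K) w :=
    ⟨mapVec (σ.symm : K →+* K) u, by funext i; simp [mapVec]⟩
  have hfix : ∀ N : Matrix (Fin 5) (Fin 5) F,
      (N.map (algebraMap F K)).map (σ : K →+* K) = N.map (algebraMap F K) := by
    intro N; ext i j; simp
  have h := congrArg σ (hdecK w)
  rw [map_add, map_mul, ← RingHom.coe_coe σ, ← qeval_map, ← qeval_map, ← qeval_map, hfix, hfix,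
    mapVec_bbMatrix_mulVec] at h
  exact h

lemma qeval_and_qeval_map_eq_zero_iff (σ : K ≃ₐ[F] K) (hστ : σ τ ≠ τ)
    (hdecK : ∀ v : Fin 5 → K, qeval M (bbMatrix τ *ᵥ v) =
      qeval (Minf.map (algebraMap F K)) v + qeval (M0.map (algebraMap F K)) v * τ)
    (v : Fin 5 → K) :
    (qeval (Minf.map (algebraMap F K)) v = 0 ∧ qeval (M0.map (algebraMap F K)) v = 0) ∧ v 4 = 0
      ↔ (qeval M (bbMatrix τ *ᵥ v) = 0 ∧ (bbMatrix τ *ᵥ v) 2 = 0) ∧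
        (qeval (M.map σ) (bbMatrix (σ τ) *ᵥ v) = 0 ∧ (bbMatrix (σ τ) *ᵥ v) 2 = 0) := by
  rw [qeval_map_bbMatrix_mulVec M Minf M0 σ hdecK, hdecK, bbMatrix_mulVec, bbMatrix_mulVec,
    ← add_mul_eq_zero_and_add_mul_eq_zero_iff hστ.symm]
  simp only [Matrix.cons_val_two, Matrix.tail_cons, Matrix.head_cons]
  tauto

end BruckBose

section SpreadLines

variable {F : Type} [Field F] [Algebra F K] {τ : K} {t0 t1 : F} {c0 c1 : K → F}

lemma bbSubst_spreadV1 (hc : ∀ x : K, x = algebraMap F K (c0 x) + algebraMap F K (c1 x) * τ)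
    (t : Option K) : bbSubst F τ (spreadV1 c0 c1 t) = ptInfVec t := by
  funext i
  cases t <;> fin_cases i <;> simp [bbSubst, spreadV1, ptInfVec, ← hc]

lemma bbSubst_spreadV2 (hτ : τ ^ 2 = algebraMap F K t1 * τ + algebraMap F K t0)
    (hc : ∀ x : K, x = algebraMap F K (c0 x) + algebraMap F K (c1 x) * τ) (t : Option K) :
    bbSubst F τ (spreadV2 c0 c1 t0 t1 t) = τ • ptInfVec t := by
  funext i
  cases t with
  | none => fin_cases i <;> simp [bbSubst, spreadV2, ptInfVec]
  | some δ =>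
    fin_cases i <;> simp [bbSubst, spreadV2, ptInfVec]
    linear_combination -τ * hc δ - algebraMap F K (c1 δ) * hτ

lemma mem_span_spreadV_iff (hτ : τ ^ 2 = algebraMap F K t1 * τ + algebraMap F K t0)
    (hτF : τ ∉ Set.range (algebraMap F K))
    (hc : ∀ x : K, x = algebraMap F K (c0 x) + algebraMap F K (c1 x) * τ)
    (t : Option K) (v : Fin 5 → F) :
    v ∈ Submodule.span F {spreadV1 c0 c1 t, spreadV2 c0 c1 t0 t1 t} ↔
      ∃ a : K, bbSubst F τ v = a • ptInfVec t := by
  have himage : ∀ a b : F, bbSubst F τ (a • spreadV1 c0 c1 t + b • spreadV2 c0 c1 t0 t1 t)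
      = (algebraMap F K a + algebraMap F K b * τ) • ptInfVec t := by
    intro a b
    rw [bbSubst_add_smul, bbSubst_spreadV1 hc, bbSubst_spreadV2 hτ hc, smul_smul, ← add_smul]
  rw [Submodule.mem_span_pair]
  constructor
  · rintro ⟨a, b, rfl⟩
    exact ⟨_, himage a b⟩
  · rintro ⟨a, ha⟩
    refine ⟨c0 a, c1 a, bbSubst_injective hτF ?_⟩
    rw [himage, ← hc, ha]

/-- For `e = ptInfVec t`, `gVec e (τ ^ q)` represents the point `T` of the transversal `g`,
and `gVec e^q τ` its conjugate `T^q`. -/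
def gVec (e : Fin 3 → K) (s : K) : Fin 5 → K := ![e 0 * s, -e 0, e 1 * s, -e 1, 0]

lemma bbMatrix_mulVec_gVec {e : Fin 3 → K} (he : e 2 = 0) (s r : K) :
    bbMatrix r *ᵥ gVec e s = (s - r) • e := by
  rw [bbMatrix_mulVec]
  funext i
  fin_cases i <;> simp [gVec, he] <;> ring

lemma eq_of_bbMatrix_mulVec_eq {s r : K} (hsr : s ≠ r) {u w : Fin 5 → K}
    (hs : bbMatrix s *ᵥ u = bbMatrix s *ᵥ w) (hr : bbMatrix r *ᵥ u = bbMatrix r *ᵥ w) :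
    u = w := by
  rw [bbMatrix_mulVec, bbMatrix_mulVec] at hs hr
  have hpair : ∀ i j : Fin 5, u i + u j * s = w i + w j * s → u i + u j * r = w i + w j * r →
      u i = w i ∧ u j = w j := by
    intro i j his hir
    have h := (add_mul_eq_zero_and_add_mul_eq_zero_iff hsr (u i - w i) (u j - w j)).mp
      ⟨by linear_combination his, by linear_combination hir⟩
    exact ⟨sub_eq_zero.mp h.1, sub_eq_zero.mp h.2⟩
  have h01 := hpair 0 1 (by simpa using congrFun hs 0) (by simpa using congrFun hr 0)
  have h23 := hpair 2 3 (by simpa using congrFun hs 1) (by simpa using congrFun hr 1)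
  have h4 : u 4 = w 4 := by simpa using congrFun hs 2
  funext i
  fin_cases i
  exacts [h01.1, h01.2, h23.1, h23.2, h4]

lemma mem_span_gVec_iff {s r : K} (hsr : s ≠ r) {e f : Fin 3 → K} (he : e 2 = 0) (hf : f 2 = 0)
    (v : Fin 5 → K) :
    v ∈ Submodule.span K {gVec e s, gVec f r} ↔
      (∃ a : K, bbMatrix r *ᵥ v = a • e) ∧ ∃ b : K, bbMatrix s *ᵥ v = b • f := by
  have himage : ∀ x a b : K, bbMatrix x *ᵥ (a • gVec e s + b • gVec f r)
      = (a * (s - x)) • e + (b * (r - x)) • f := by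
    intro x a b
    rw [mulVec_add, mulVec_smul, mulVec_smul, bbMatrix_mulVec_gVec he,
      bbMatrix_mulVec_gVec hf, smul_smul, smul_smul]
  rw [Submodule.mem_span_pair]
  constructor
  · rintro ⟨a, b, rfl⟩
    exact ⟨⟨a * (s - r), by simp [himage]⟩, ⟨b * (r - s), by simp [himage]⟩⟩
  · rintro ⟨⟨a, ha⟩, ⟨b, hb⟩⟩
    refine ⟨a / (s - r), b / (r - s), eq_of_bbMatrix_mulVec_eq hsr ?_ ?_⟩
    · simp [himage, hb, div_mul_cancel₀ _ (sub_ne_zero.mpr hsr.symm)]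
    · simp [himage, ha, div_mul_cancel₀ _ (sub_ne_zero.mpr hsr)]

lemma gptVec_eq_gVec (τ : K) (q : ℕ) (t : Option K) :
    gptVec τ q t = gVec (ptInfVec t) (τ ^ q) := by
  funext i
  cases t <;> fin_cases i <;> simp [gptVec, gVec, ptInfVec, A0v, A1v]

lemma gqptVec_eq_gVec {q : ℕ} (σ : K →+* K) (hσ : ∀ x, σ x = x ^ q) (τ : K) (t : Option K) :
    gqptVec τ q t = gVec (mapVec σ (ptInfVec t)) τ := by
  funext i
  cases t <;> fin_cases i <;> simp [gqptVec, gVec, ptInfVec, mapVec, B0v, B1v, ← hσ]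

lemma gVec_mapVec_ptInfVec {τ' : K} (hsum : τ + τ' = algebraMap F K t1)
    (hprod : τ * τ' = -algebraMap F K t0) (σ : K →+* K)
    (hσ : ∀ x : K, σ x = algebraMap F K (c0 x) + algebraMap F K (c1 x) * τ) (t : Option K) :
    gVec (mapVec σ (ptInfVec t)) τ'
      = τ' • algVec F (spreadV1 c0 c1 t) - algVec F (spreadV2 c0 c1 t0 t1 t) := by
  funext i
  cases t with
  | none => fin_cases i <;> simp [gVec, mapVec, ptInfVec, algVec, spreadV1, spreadV2]
  | some δ =>
    fin_cases i <;> simp [gVec, mapVec, ptInfVec, algVec, spreadV1, spreadV2, hσ δ]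
    · linear_combination algebraMap F K (c1 δ) * hprod
    · linear_combination -algebraMap F K (c1 δ) * hsum

lemma span_algVec_spreadV_eq (σ : K ≃ₐ[F] K) (hστ : σ τ ≠ τ)
    (hsum : τ + σ τ = algebraMap F K t1) (hprod : τ * σ τ = -algebraMap F K t0)
    (hc : ∀ x : K, x = algebraMap F K (c0 x) + algebraMap F K (c1 x) * τ) (t : Option K) :
    Submodule.span K {algVec F (spreadV1 c0 c1 t), algVec F (spreadV2 c0 c1 t0 t1 t)}
      = Submodule.span K {gVec (ptInfVec t) (σ τ), gVec (mapVec (σ : K →+* K) (ptInfVec t)) τ} := by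
  have hP : gVec (ptInfVec t) (σ τ) = σ τ • algVec F (spreadV1 c0 c1 t)
      - algVec F (spreadV2 c0 c1 t0 t1 t) :=
    gVec_mapVec_ptInfVec hsum hprod (RingHom.id K) hc t
  have hQ := gVec_mapVec_ptInfVec (τ := σ τ) (τ' := τ) (by rw [add_comm, hsum])
    (by rw [mul_comm, hprod]) (σ : K →+* K) (fun x => by simpa using congrArg σ (hc x)) t
  rw [hP, hQ, span_pair_smul_sub_eq hστ]

lemma mem_lineTh_gpt_gqpt_iff {q : ℕ} (σ : K →+* K) (hσ : ∀ x, σ x = x ^ q) (hστ : σ τ ≠ τ)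
    (t t' : Option K) (p : PP K 5) :
    p ∈ lineTh (gpt τ q t) (gqpt τ q t') ↔
      (∃ a : K, bbMatrix τ *ᵥ p.rep = a • ptInfVec t) ∧
        ∃ b : K, bbMatrix (σ τ) *ᵥ p.rep = b • mapVec σ (ptInfVec t') := by
  rw [gpt, gqpt, lineTh_mk_mk, gptVec_eq_gVec, gqptVec_eq_gVec σ hσ, ← hσ]
  exact mem_span_gVec_iff hστ (ptInfVec_two t) (by simp [mapVec, ptInfVec_two]) p.rep

lemma mem_extSpreadLine_iff (σ : K ≃ₐ[F] K) (hστ : σ τ ≠ τ)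
    (hsum : τ + σ τ = algebraMap F K t1) (hprod : τ * σ τ = -algebraMap F K t0)
    (hc : ∀ x : K, x = algebraMap F K (c0 x) + algebraMap F K (c1 x) * τ) (t : Option K)
    (p : PP K 5) :
    p ∈ extSpreadLine F c0 c1 t0 t1 t ↔
      (∃ a : K, bbMatrix τ *ᵥ p.rep = a • ptInfVec t) ∧
        ∃ b : K, bbMatrix (σ τ) *ᵥ p.rep = b • mapVec (σ : K →+* K) (ptInfVec t) := by
  rw [extSpreadLine, span_algVec_spreadV_eq σ hστ hsum hprod hc]
  exact mem_span_gVec_iff hστ (ptInfVec_two t) (by simp [mapVec, ptInfVec_two]) p.rep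

end SpreadLines

theorem statement_9_general
    {F K : Type} [Field F] [Field K] [Fintype F] [Fintype K] [Algebra F K]
    (q : ℕ) (hq : Fintype.card F = q)
    (τ : K) (t0 t1 : F)
    (hτ : τ ^ 2 = algebraMap F K t1 * τ + algebraMap F K t0)
    (hτF : τ ∉ Set.range (algebraMap F K))
    (c0 c1 : K → F)
    (hc : ∀ x : K, x = algebraMap F K (c0 x) + algebraMap F K (c1 x) * τ)
    (M : Matrix (Fin 3) (Fin 3) K)
    (Minf M0 : Matrix (Fin 5) (Fin 5) F)
    (hdec : ∀ v : Fin 5 → F, qeval M (bbSubst F τ v) =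
      algebraMap F K (qeval Minf v) + algebraMap F K (qeval M0 v) * τ)
    (tP tQ : Option K)
    (hsec : {p : PP K 3 | qeval M p.rep = 0} ∩ linf K = {ptInf tP, ptInf tQ}) :
    {p : PP F 5 | qeval Minf p.rep = 0 ∧ qeval M0 p.rep = 0} ∩ sinf F
      = spreadLine c0 c1 t0 t1 tP ∪ spreadLine c0 c1 t0 t1 tQ ∧
    {p : PP K 5 | qeval (Minf.map (algebraMap F K)) p.rep = 0 ∧
        qeval (M0.map (algebraMap F K)) p.rep = 0} ∩ sinf K
      = extSpreadLine F c0 c1 t0 t1 tP ∪ extSpreadLine F c0 c1 t0 t1 tQ ∪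
        lineTh (gpt τ q tP) (gqpt τ q tQ) ∪ lineTh (gqpt τ q tP) (gpt τ q tQ) := by
  set σ := FiniteField.frobeniusAlgEquivOfAlgebraic F K
  have hσ : ∀ x, σ x = x ^ q := fun x => by rw [← hq]; rfl
  have hστ : σ τ ≠ τ := fun h =>
    hτF (mem_range_algebraMap_of_pow_card_eq_self (by rw [hq, ← hσ, h]))
  obtain ⟨hsum, hprod⟩ := add_eq_and_mul_eq_of_sq_eq hστ.symm hτ (by simpa using congrArg σ hτ)
  constructor
  · ext p
    simp only [spreadLine, ptsOf, Set.mem_union, Set.mem_inter_iff, Set.mem_ofPred_eq,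
      mem_span_spreadV_iff hτ hτF hc]
    rw [← qeval_eq_zero_and_apply_two_iff M tP tQ hsec,
      ← qeval_bbSubst_eq_zero_iff M Minf M0 hτF hdec]
    rfl
  · have hconj : ∀ X : Fin 3 → K, qeval (M.map σ) X = 0 ∧ X 2 = 0 ↔
        (∃ a : K, X = a • mapVec (σ : K →+* K) (ptInfVec tP)) ∨
          ∃ a : K, X = a • mapVec (σ : K →+* K) (ptInfVec tQ) :=
      qeval_map_eq_zero_and_apply_two_iff M tP tQ σ.toRingEquiv hsec
    ext p
    rw [lineTh_comm (gqpt τ q tP)]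
    simp only [Set.mem_union, mem_extSpreadLine_iff σ hστ hsum hprod hc,
      mem_lineTh_gpt_gqpt_iff (σ : K →+* K) hσ hστ]
    rw [Set.mem_inter_iff, Set.mem_ofPred_eq, show p ∈ sinf K ↔ p.rep 4 = 0 from Iff.rfl,
      qeval_and_qeval_map_eq_zero_iff M Minf M0 σ hστ (qeval_bbMatrix_mulVec M Minf M0 hdec),
      qeval_eq_zero_and_apply_two_iff M tP tQ hsec, hconj]
    constructor
    · rintro ⟨hP | hQ, hP' | hQ'⟩
      exacts [.inl (.inl (.inl ⟨hP, hP'⟩)), .inl (.inr ⟨hP, hQ'⟩), .inr ⟨hQ, hP'⟩,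
        .inl (.inl (.inr ⟨hQ, hQ'⟩))]
    · rintro (((⟨hP, hP'⟩ | ⟨hQ, hQ'⟩) | ⟨hP, hQ'⟩) | ⟨hQ, hP'⟩)
      exacts [⟨.inl hP, .inl hP'⟩, ⟨.inr hQ, .inr hQ'⟩, ⟨.inl hP, .inr hQ'⟩, ⟨.inr hQ, .inl hP'⟩]

/-- For a conic `𝒪` secant to `ℓ∞` at `P̄, Q̄`, the Bruck-Bose set `[𝒪]` meets `Σ∞`
exactly in the spread lines `[P], [Q]`; and over `GF(q²)`, `[𝒪]⋆` meets `z = 0` exactly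
in `[P]⋆ ∪ [Q]⋆ ∪ PQ^q ∪ P^qQ`. -/
theorem statement_9
    {F K : Type} [Field F] [Field K] [Fintype F] [Fintype K] [Algebra F K]
    (q : ℕ) (hq : Fintype.card F = q) (hK : Fintype.card K = q ^ 2)
    (τ : K) (t0 t1 : F)
    (hτ : τ ^ 2 = algebraMap F K t1 * τ + algebraMap F K t0)
    (hτF : τ ∉ Set.range (algebraMap F K))
    (c0 c1 : K → F)
    (hc : ∀ x : K, x = algebraMap F K (c0 x) + algebraMap F K (c1 x) * τ)
    (M : Matrix (Fin 3) (Fin 3) K)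
    (hO : IsFq2Conic {p : PP K 3 | qeval M p.rep = 0})
    (Minf M0 : Matrix (Fin 5) (Fin 5) F)
    (hdec : ∀ v : Fin 5 → F, qeval M (bbSubst F τ v) =
      algebraMap F K (qeval Minf v) + algebraMap F K (qeval M0 v) * τ)
    (tP tQ : Option K) (hne : ptInf tP ≠ ptInf tQ)
    (hsec : {p : PP K 3 | qeval M p.rep = 0} ∩ linf K = {ptInf tP, ptInf tQ}) :
    {p : PP F 5 | qeval Minf p.rep = 0 ∧ qeval M0 p.rep = 0} ∩ sinf F
      = spreadLine c0 c1 t0 t1 tP ∪ spreadLine c0 c1 t0 t1 tQ ∧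
    {p : PP K 5 | qeval (Minf.map (algebraMap F K)) p.rep = 0 ∧
        qeval (M0.map (algebraMap F K)) p.rep = 0} ∩ sinf K
      = extSpreadLine F c0 c1 t0 t1 tP ∪ extSpreadLine F c0 c1 t0 t1 tQ ∪
        lineTh (gpt τ q tP) (gqpt τ q tQ) ∪ lineTh (gqpt τ q tP) (gpt τ q tQ) :=
  statement_9_general q hq τ t0 t1 hτ hτF c0 c1 hc M Minf M0 hdec tP tQ hsec

end BaerConics
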